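/- If every countable quotient of a group G is trivial (equivalently, every normal subgroup of countable index equals G), then G is perfect, i.e., G equals its commutator subgroup. -/

import Mathlib

/-!
A nontrivial element of the abelianization `Gᵃᵇ` is detected by a character `Gᵃᵇ → ℚ/ℤ`
(as `ℚ/ℤ` is an injective cogenerator of abelian groups), and the kernel of its composite with
`G → Gᵃᵇ` is a normal subgroup with countable quotient, since `ℚ/ℤ` is countable. So every
element outside `[G, G]` survives in some countable quotient of `G`.
-/

instance AddCircle.countable_of_rat {p : ℚ} : Countable (AddCircle p) :=
  Quotient.countable

instance Multiplicative.countable {α : Type*} [Countable α] : Countable (Multiplicative α) :=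
  ‹Countable α›

theorem MonoidHom.countable_quotient_ker {G H : Type*} [Group G] [Group H] [Countable H]
    (φ : G →* H) : Countable (G ⧸ φ.ker) :=
  Countable.of_equiv _ (QuotientGroup.quotientKerEquivRange φ).symm.toEquiv

theorem CommGroup.exists_monoidHom_addCircle_rat_ne_one {A : Type*} [CommGroup A] {a : A}
    (ha : a ≠ 1) : ∃ φ : A →* Multiplicative (AddCircle (1 : ℚ)), φ a ≠ 1 := by
  obtain ⟨c, hc⟩ := CharacterModule.exists_character_apply_ne_zero_of_ne_zero
    (a := Additive.ofMul a) ha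
  exact ⟨AddMonoidHom.toMultiplicativeRight c, hc⟩

theorem exists_normal_countable_quotient_not_mem_of_not_mem_commutator {G : Type*} [Group G]
    {g : G} (hg : g ∉ commutator G) :
    ∃ N : Subgroup G, N.Normal ∧ Countable (G ⧸ N) ∧ g ∉ N := by
  have hg_ab : Abelianization.of g ≠ 1 := mt (QuotientGroup.eq_one_iff g).1 hg
  obtain ⟨φ, hφ⟩ := CommGroup.exists_monoidHom_addCircle_rat_ne_one hg_ab
  exact ⟨(φ.comp Abelianization.of).ker, inferInstance,
    (φ.comp Abelianization.of).countable_quotient_ker, hφ⟩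

theorem perfect_of_countable_quotients_trivial
    {G : Type*} [Group G]
    (h : ∀ (N : Subgroup G) [N.Normal], Countable (G ⧸ N) → N = ⊤) :
    commutator G = ⊤ := by
  refine (Subgroup.eq_top_iff' _).2 fun g => ?_
  by_contra hg
  obtain ⟨N, _, hN, hgN⟩ := exists_normal_countable_quotient_not_mem_of_not_mem_commutator hg
  exact hgN (h N hN ▸ Subgroup.mem_top g)
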